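/- arXiv:2205.07189 — 4 statements merged into one kernel-verified Lean document; each statement's English description precedes it below -/
import Mathlib

section
/- For every finite simple graph G, the vi-simultaneous chromatic number of G equals the chromatic number of the graph G^{3/3}, i.e., χ_vi(G) = χ(G^{3/3}). -/
open SimpleGraph

variable {V : Type*}

/-- An *incidence* of `G`: a pair `(v, e)` where `e` is an edge of `G` and `v ∈ e`. -/
abbrev Inc (G : SimpleGraph V) : Type _ :=
  {p : V × Sym2 V // p.2 ∈ G.edgeSet ∧ p.1 ∈ p.2}

/-- The elements to be colored in a vi-simultaneous coloring: vertices together with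
incidences. -/
abbrev VIElem (G : SimpleGraph V) : Type _ := V ⊕ Inc G

/-- Adjacency between elements of `V(G) ∪ I(G)`: two vertices are adjacent when they are
adjacent in `G`; a vertex `u` and an incidence `(w, f)` are adjacent when `u ∈ f`; two
distinct incidences `(v, e)`, `(w, f)` are adjacent when `v = w`, or `e = f`, or
`{v, w} = e`, or `{v, w} = f`. -/
def VIAdj (G : SimpleGraph V) : VIElem G → VIElem G → Prop
  | Sum.inl u, Sum.inl w => G.Adj u w
  | Sum.inl u, Sum.inr i => u ∈ i.1.2
  | Sum.inr i, Sum.inl u => u ∈ i.1.2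
  | Sum.inr i, Sum.inr j => i ≠ j ∧
      (i.1.1 = j.1.1 ∨ i.1.2 = j.1.2 ∨ s(i.1.1, j.1.1) = i.1.2 ∨ s(i.1.1, j.1.1) = j.1.2)

/-- A vi-simultaneous proper `k`-coloring of `G`: adjacent or incident elements of
`V(G) ∪ I(G)` receive distinct colors. -/
def IsVIColoring (G : SimpleGraph V) {k : ℕ} (c : VIElem G → Fin k) : Prop :=
  ∀ a b, VIAdj G a b → c a ≠ c b

/-- The vi-simultaneous chromatic number `χ_vi(G)`: the least `k` admitting a
vi-simultaneous proper `k`-coloring. -/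
noncomputable def chiVI (G : SimpleGraph V) : ℕ :=
  sInf {k | ∃ c : VIElem G → Fin k, IsVIColoring G c}

/-- `I₂(v)`: the set of second incidences of a vertex `v`, i.e. incidences `(u, e)` with
`e = {u, v}` and `u ≠ v`. -/
def I2 (G : SimpleGraph V) (v : V) : Set (Inc G) :=
  {i | i.1.1 ≠ v ∧ i.1.2 = s(i.1.1, v)}

/-- A vi-simultaneous `(k, s)`-coloring: a vi-simultaneous proper `k`-coloring in which at
most `s` distinct colors appear on `I₂(v)` for every vertex `v`. -/
def IsVISColoring (G : SimpleGraph V) (s : ℕ) {k : ℕ} (c : VIElem G → Fin k) : Prop :=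
  IsVIColoring G c ∧ ∀ v : V, ((fun i => c (Sum.inr i)) '' I2 G v).ncard ≤ s

/-- `χ_{vi,s}(G)`: the least `k` admitting a vi-simultaneous `(k, s)`-coloring. -/
noncomputable def chiVIS (G : SimpleGraph V) (s : ℕ) : ℕ :=
  sInf {k | ∃ c : VIElem G → Fin k, IsVISColoring G s c}

/-- The maximum degree `Δ(G)` of a finite graph. -/
noncomputable def maxDeg [Fintype V] (G : SimpleGraph V) : ℕ :=
  Finset.univ.sup fun v => (G.neighborSet v).ncard

/-- Internal vertices of the 3-subdivision: `(u, v)` with `u ~ v` represents the internal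
vertex `(uv)₁` of the path replacing the edge `{u, v}`, the one nearer to `u`
(and `(uv)₂ = (vu)₁`). -/
abbrev IVert (G : SimpleGraph V) : Type _ := {p : V × V // G.Adj p.1 p.2}

/-- The 3-subdivision `G^{1/3}` of `G`: each edge `{u, v}` is replaced by the path
`u, (uv)₁, (vu)₁, v` of length 3. -/
def subdiv3 (G : SimpleGraph V) : SimpleGraph (V ⊕ IVert G) where
  Adj x y :=
    match x, y with
    | Sum.inl _, Sum.inl _ => False
    | Sum.inl u, Sum.inr i => u = i.1.1
    | Sum.inr i, Sum.inl u => u = i.1.1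
    | Sum.inr i, Sum.inr j => i.1.1 = j.1.2 ∧ i.1.2 = j.1.1
  symm := by
    constructor
    rintro (u | i) (w | j) h
    · exact h.elim
    · exact h
    · exact h
    · exact ⟨h.2.symm, h.1.symm⟩
  loopless := by
    constructor
    rintro (u | i) h
    · exact h.elim
    · exact G.loopless.irrefl i.1.2 (h.1 ▸ i.2)

/-- The 3rd power of a graph: two distinct vertices are adjacent iff their distance is at
most 3, i.e. iff they are joined by a walk of length at most 3. -/
def power3 {W : Type*} (H : SimpleGraph W) : SimpleGraph W where
  Adj x y := x ≠ y ∧ ∃ w : H.Walk x y, w.length ≤ 3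
  symm := by
    constructor
    rintro x y ⟨hxy, w, hw⟩
    exact ⟨hxy.symm, w.reverse, by simpa using hw⟩
  loopless := by
    constructor
    rintro x ⟨hxy, -⟩
    exact hxy rfl

/-!
Send a vertex of `G` to itself and an incidence `(u, uv)` to the internal vertex `(uv)₁` of
`G^{1/3}` next to `u`. This is a bijection `V(G) ∪ I(G) → V(G^{1/3})` under which
vi-adjacency becomes distance at most 3 in `G^{1/3}`: two vertices of `G` are at distance 3
iff they are adjacent in `G`, a vertex `u` is within distance 2 of `(vw)₁` iff `u ∈ {v, w}`,
and `(uv)₁ ≠ (wx)₁` are within distance 3 iff `w ∈ {u, v}` or `x = u`. So vi-simultaneous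
colorings of `G` are exactly the proper colorings of `G^{3/3}`.
-/

theorem exists_walk_length_le_three_iff {W : Type*} (H : SimpleGraph W) (x y : W) :
    (∃ w : H.Walk x y, w.length ≤ 3) ↔
      x = y ∨ H.Adj x y ∨ (∃ z, H.Adj x z ∧ H.Adj z y) ∨
        ∃ z z', H.Adj x z ∧ H.Adj z z' ∧ H.Adj z' y := by
  constructor
  · rintro ⟨w, hw⟩
    match w, hw with
    | .nil, _ => exact .inl rfl
    | .cons h .nil, _ => exact .inr (.inl h)
    | .cons h (.cons h' .nil), _ => exact .inr (.inr (.inl ⟨_, h, h'⟩))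
    | .cons h (.cons h' (.cons h'' .nil)), _ => exact .inr (.inr (.inr ⟨_, _, h, h', h''⟩))
    | .cons _ (.cons _ (.cons _ (.cons _ _))), hw => simp only [Walk.length_cons] at hw; omega
  · rintro (rfl | h | ⟨z, h, h'⟩ | ⟨z, z', h, h', h''⟩)
    · exact ⟨.nil, by simp⟩
    · exact ⟨.cons h .nil, by simp⟩
    · exact ⟨.cons h (.cons h' .nil), by simp⟩
    · exact ⟨.cons h (.cons h' (.cons h'' .nil)), by simp⟩

theorem power3_adj_iff {W : Type*} {H : SimpleGraph W} {x y : W} :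
    (power3 H).Adj x y ↔ x ≠ y ∧ (H.Adj x y ∨ (∃ z, H.Adj x z ∧ H.Adj z y) ∨
      ∃ z z', H.Adj x z ∧ H.Adj z z' ∧ H.Adj z' y) := by
  refine and_congr_right fun hne => ?_
  rw [exists_walk_length_le_three_iff, or_iff_right hne]

section Subdivision3

variable {G : SimpleGraph V}

@[simp]
theorem subdiv3_not_adj_inl_inl (u w : V) : ¬(subdiv3 G).Adj (.inl u) (.inl w) := id

@[simp]
theorem subdiv3_adj_inl_inr {u : V} {p : IVert G} :
    (subdiv3 G).Adj (.inl u) (.inr p) ↔ u = p.1.1 := Iff.rfl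

@[simp]
theorem subdiv3_adj_inr_inl {u : V} {p : IVert G} :
    (subdiv3 G).Adj (.inr p) (.inl u) ↔ u = p.1.1 := Iff.rfl

@[simp]
theorem subdiv3_adj_inr_inr {p q : IVert G} :
    (subdiv3 G).Adj (.inr p) (.inr q) ↔ p.1.1 = q.1.2 ∧ p.1.2 = q.1.1 := Iff.rfl

theorem power3_subdiv3_adj_inl_inl {u w : V} :
    (power3 (subdiv3 G)).Adj (.inl u) (.inl w) ↔ G.Adj u w := by
  simp only [power3_adj_iff, Sum.exists, Subtype.exists, Prod.exists, subdiv3_not_adj_inl_inl,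
    subdiv3_adj_inl_inr, subdiv3_adj_inr_inl, subdiv3_adj_inr_inr]
  grind [SimpleGraph.Adj.symm, SimpleGraph.Adj.ne]

theorem power3_subdiv3_adj_inl_inr {u : V} {p : IVert G} :
    (power3 (subdiv3 G)).Adj (.inl u) (.inr p) ↔ u = p.1.1 ∨ u = p.1.2 := by
  simp only [power3_adj_iff, Sum.exists, Subtype.exists, Prod.exists, subdiv3_not_adj_inl_inl,
    subdiv3_adj_inl_inr, subdiv3_adj_inr_inl, subdiv3_adj_inr_inr]
  have hp := p.2
  grind [SimpleGraph.Adj.symm]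

theorem power3_subdiv3_adj_inr_inr {p q : IVert G} :
    (power3 (subdiv3 G)).Adj (.inr p) (.inr q) ↔
      p ≠ q ∧ (q.1.1 = p.1.1 ∨ q.1.1 = p.1.2 ∨ q.1.2 = p.1.1) := by
  simp only [power3_adj_iff, Sum.exists, Subtype.exists, Prod.exists, subdiv3_not_adj_inl_inl,
    subdiv3_adj_inl_inr, subdiv3_adj_inr_inl, subdiv3_adj_inr_inr]
  have hp := p.2
  have hq := q.2
  grind [SimpleGraph.Adj.symm, SimpleGraph.Adj.ne]

def IVert.toInc (p : IVert G) : Inc G :=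
  ⟨(p.1.1, s(p.1.1, p.1.2)), G.mem_edgeSet.2 p.2, Sym2.mem_mk_left _ _⟩

noncomputable def iVertEquivInc : IVert G ≃ Inc G where
  toFun := IVert.toInc
  invFun i := ⟨(i.1.1, Sym2.Mem.other i.2.2), by
    rw [← G.mem_edgeSet, Sym2.other_spec]
    exact i.2.1⟩
  left_inv p := Subtype.ext <| Prod.ext rfl <| Sym2.congr_right.1 <| Sym2.other_spec _
  right_inv i := Subtype.ext <| Prod.ext rfl <| Sym2.other_spec _

theorem viAdj_inl_toInc {u : V} {p : IVert G} :
    VIAdj G (.inl u) (.inr p.toInc) ↔ u = p.1.1 ∨ u = p.1.2 := Sym2.mem_iff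

theorem viAdj_toInc_inl {u : V} {p : IVert G} :
    VIAdj G (.inr p.toInc) (.inl u) ↔ u = p.1.1 ∨ u = p.1.2 := Sym2.mem_iff

theorem viAdj_toInc_toInc {p q : IVert G} :
    VIAdj G (.inr p.toInc) (.inr q.toInc) ↔
      p ≠ q ∧ (q.1.1 = p.1.1 ∨ q.1.1 = p.1.2 ∨ q.1.2 = p.1.1) := by
  have hp := p.2
  have hq := q.2
  simp only [VIAdj, IVert.toInc, ne_eq, Subtype.ext_iff, Prod.ext_iff, Sym2.eq_iff]
  grind [SimpleGraph.Adj.ne]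

noncomputable def sumIVertEquivVIElem : V ⊕ IVert G ≃ VIElem G :=
  Equiv.sumCongr (Equiv.refl V) iVertEquivInc

theorem viAdj_sumIVertEquivVIElem (x y : V ⊕ IVert G) :
    VIAdj G (sumIVertEquivVIElem x) (sumIVertEquivVIElem y) ↔ (power3 (subdiv3 G)).Adj x y := by
  rcases x with u | p <;> rcases y with w | q
  · exact power3_subdiv3_adj_inl_inl.symm
  · exact viAdj_inl_toInc.trans power3_subdiv3_adj_inl_inr.symm
  · exact viAdj_toInc_inl.trans (power3_subdiv3_adj_inl_inr.symm.trans (adj_comm _ _ _))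
  · exact viAdj_toInc_toInc.trans power3_subdiv3_adj_inr_inr.symm

theorem exists_isVIColoring_iff_colorable (k : ℕ) :
    (∃ c : VIElem G → Fin k, IsVIColoring G c) ↔ (power3 (subdiv3 G)).Colorable k := by
  constructor
  · rintro ⟨c, hc⟩
    exact ⟨.mk (c ∘ sumIVertEquivVIElem) fun h => hc _ _ ((viAdj_sumIVertEquivVIElem _ _).2 h)⟩
  · rintro ⟨C⟩
    refine ⟨C ∘ sumIVertEquivVIElem.symm, fun a b h => C.valid ?_⟩
    rwa [← viAdj_sumIVertEquivVIElem, Equiv.apply_symm_apply, Equiv.apply_symm_apply]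

end Subdivision3

theorem chiVI_eq_chromaticNumber_power3_subdiv3_general {V : Type*} [Fintype V]
    (G : SimpleGraph V) :
    (chiVI G : ℕ∞) = (power3 (subdiv3 G)).chromaticNumber := by
  have : Fintype (V ⊕ IVert G) := Fintype.ofFinite _
  rw [(power3 (subdiv3 G)).colorable_of_fintype.chromaticNumber_eq_sInf, chiVI]
  simp_rw [exists_isVIColoring_iff_colorable]

/-- For every finite simple graph `G`, the vi-simultaneous chromatic
number of `G` equals the chromatic number of `G^{3/3}`, the 3rd power of the
3-subdivision of `G`. -/
theorem chiVI_eq_chromaticNumber_power3_subdiv3 {V : Type*} [Fintype V] [DecidableEq V]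
    (G : SimpleGraph V) :
    (chiVI G : ℕ∞) = (power3 (subdiv3 G)).chromaticNumber :=
  chiVI_eq_chromaticNumber_power3_subdiv3_general G
end

section
/- For every finite simple graph G with at least one edge, χ_{vi,1}(G) = χ(T_{vi,1}(G)), where T_{vi,1}(G) is the graph on vertex set V(G) × {1,2} in which (v,i) and (u,j) are adjacent iff: i=j=1 and d_G(v,u)=1; or i=j=2 and 1 ≤ d_G(v,u) ≤ 2; or i≠j and 0 ≤ d_G(v,u) ≤ 1. -/
open SimpleGraph

variable {V : Type*}

/-- The graph `T_{vi,1}(G)` on `V(G) × {1, 2}` (here `0 : Fin 2` plays the role of `1`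
and `1 : Fin 2` the role of `2`): `(v, i)` and `(u, j)` are adjacent iff
`i = j = 1` and `d_G(v, u) = 1`; or `i = j = 2` and `1 ≤ d_G(v, u) ≤ 2`; or
`i ≠ j` and `0 ≤ d_G(v, u) ≤ 1`. -/
def Tvi1 (G : SimpleGraph V) : SimpleGraph (V × Fin 2) where
  Adj x y :=
    (x.2 = 0 ∧ y.2 = 0 ∧ G.Adj x.1 y.1) ∨
    (x.2 = 1 ∧ y.2 = 1 ∧ x.1 ≠ y.1 ∧ ∃ w : G.Walk x.1 y.1, w.length ≤ 2) ∨
    (x.2 ≠ y.2 ∧ (x.1 = y.1 ∨ G.Adj x.1 y.1))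
  symm := by
    constructor
    rintro x y (⟨h1, h2, h3⟩ | ⟨h1, h2, h3, w, hw⟩ | ⟨h1, h2⟩)
    · exact Or.inl ⟨h2, h1, h3.symm⟩
    · exact Or.inr (Or.inl ⟨h2, h1, h3.symm, w.reverse, by simpa using hw⟩)
    · exact Or.inr (Or.inr ⟨h1.symm, h2.imp Eq.symm fun h => h.symm⟩)
  loopless := by
    constructor
    rintro x (⟨-, -, h⟩ | ⟨-, -, h, -⟩ | ⟨h, -⟩)
    · exact G.irrefl h
    · exact h rfl
    · exact h rfl

/-!
A vi-coloring in which every `I₂(v)` is monochromatic amounts to a proper coloring of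
`T_{vi,1}(G)`: give `(v, 1)` the color of `v` and `(v, 2)` the common color of `I₂(v)`.
Adjacent incidences lie in some `I₂(v)`, `I₂(v')` with `1 ≤ d(v, v') ≤ 2`, and conversely such
`v, v'` always carry adjacent incidences: `(v', v'v)` and `(v, vv')` when `vv'` is an edge,
`(m, mv)` and `(m, mv')` for a common neighbour `m`. The vertices adjacent to `(u, uv)` are `u`
and `v`, matching the edges between the two layers. A vertex with `I₂(v) = ∅` still needs a
color for `(v, 2)` other than that of `v`; it exists because an edge of `G` forces two colors.
-/

namespace Inc

variable {G : SimpleGraph V} {a b c d : V}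

def ofAdj (h : G.Adj a b) : Inc G := ⟨(a, s(a, b)), h, Sym2.mem_mk_left a b⟩

noncomputable def other (i : Inc G) : V := Sym2.Mem.other i.2.2

lemma exists_ofAdj_eq (i : Inc G) : ∃ a b, ∃ h : G.Adj a b, ofAdj h = i := by
  obtain ⟨⟨a, e⟩, he, ha⟩ := i
  have hspec : s(a, Sym2.Mem.other ha) = e := Sym2.other_spec ha
  exact ⟨a, _, by rwa [← hspec] at he, by simp only [ofAdj, hspec]⟩

lemma ofAdj_inj (h : G.Adj a b) (h' : G.Adj c d) : ofAdj h = ofAdj h' ↔ a = c ∧ b = d := by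
  simp only [ofAdj, Subtype.mk.injEq, Prod.mk.injEq]
  constructor
  · rintro ⟨rfl, he⟩
    exact ⟨rfl, Sym2.congr_right.mp he⟩
  · rintro ⟨rfl, rfl⟩
    exact ⟨rfl, rfl⟩

@[simp]
lemma other_ofAdj (h : G.Adj a b) : (ofAdj h).other = b :=
  Sym2.congr_right.mp (Sym2.other_spec (Sym2.mem_mk_left a b))

@[simp]
lemma ofAdj_mem_I2_iff (h : G.Adj a b) {v : V} : ofAdj h ∈ I2 G v ↔ b = v := by
  simp only [I2, ofAdj, Set.mem_ofPred_eq, Sym2.congr_right]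
  exact ⟨And.right, fun hb => ⟨hb ▸ h.ne, hb⟩⟩

end Inc

section VIAdj

variable {G : SimpleGraph V} {a b c d w : V}

@[simp]
lemma viAdj_inl_ofAdj (h : G.Adj a b) :
    VIAdj G (.inl w) (.inr (Inc.ofAdj h)) ↔ w = a ∨ w = b :=
  Sym2.mem_iff

@[simp]
lemma viAdj_ofAdj_inl (h : G.Adj a b) :
    VIAdj G (.inr (Inc.ofAdj h)) (.inl w) ↔ w = a ∨ w = b :=
  Sym2.mem_iff

lemma viAdj_ofAdj_ofAdj (h : G.Adj a b) (h' : G.Adj c d) :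
    VIAdj G (.inr (Inc.ofAdj h)) (.inr (Inc.ofAdj h')) ↔
      ¬(a = c ∧ b = d) ∧ (a = c ∨ s(a, b) = s(c, d) ∨ c = b ∨ a = d) := by
  simp only [VIAdj, ne_eq, Inc.ofAdj_inj]
  simp only [Inc.ofAdj, Sym2.congr_right]
  rw [Sym2.eq_swap (a := a) (b := c), Sym2.congr_right]

end VIAdj

lemma SimpleGraph.exists_walk_length_le_two_iff {G : SimpleGraph V} {a b : V} :
    (∃ w : G.Walk a b, w.length ≤ 2) ↔ a = b ∨ G.Adj a b ∨ ∃ m, G.Adj a m ∧ G.Adj m b := by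
  constructor
  · rintro ⟨w, hw⟩
    match w, hw with
    | .nil, _ => exact Or.inl rfl
    | .cons h .nil, _ => exact Or.inr (Or.inl h)
    | .cons h (.cons h' .nil), _ => exact Or.inr (Or.inr ⟨_, h, h'⟩)
    | .cons _ (.cons _ (.cons _ _)), hw => simp only [Walk.length_cons] at hw; omega
  · rintro (rfl | h | ⟨m, h, h'⟩)
    · exact ⟨.nil, by simp⟩
    · exact ⟨h.toWalk, by simp⟩
    · exact ⟨.cons h h'.toWalk, by simp⟩

section Tvi1

variable {G : SimpleGraph V} {a b : V}

@[simp]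
lemma tvi1_adj_zero_zero : (Tvi1 G).Adj (a, 0) (b, 0) ↔ G.Adj a b := by
  simp [Tvi1]

@[simp]
lemma tvi1_adj_one_one :
    (Tvi1 G).Adj (a, 1) (b, 1) ↔ a ≠ b ∧ (G.Adj a b ∨ ∃ m, G.Adj a m ∧ G.Adj m b) := by
  simp only [Tvi1, exists_walk_length_le_two_iff]
  grind

@[simp]
lemma tvi1_adj_zero_one : (Tvi1 G).Adj (a, 0) (b, 1) ↔ a = b ∨ G.Adj a b := by
  simp [Tvi1]

@[simp]
lemma tvi1_adj_one_zero : (Tvi1 G).Adj (a, 1) (b, 0) ↔ b = a ∨ G.Adj b a := by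
  rw [adj_comm, tvi1_adj_zero_one]

end Tvi1

section Colorings

variable {G : SimpleGraph V} {k : ℕ}

/-- An incidence goes to the second-layer copy of its other endpoint, so `I₂(v)` collapses
to `(v, 2)`. -/
noncomputable def toTvi1 : VIElem G → V × Fin 2
  | .inl v => (v, 0)
  | .inr i => (i.other, 1)

lemma tvi1_adj_toTvi1 {x y : VIElem G} (h : VIAdj G x y) :
    (Tvi1 G).Adj (toTvi1 x) (toTvi1 y) := by
  rcases x with u | i <;> rcases y with w | j
  · simpa [toTvi1, VIAdj] using h
  · obtain ⟨a, b, hab, rfl⟩ := j.exists_ofAdj_eq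
    rw [viAdj_inl_ofAdj] at h
    rcases h with rfl | rfl <;> simp [toTvi1, hab]
  · obtain ⟨a, b, hab, rfl⟩ := i.exists_ofAdj_eq
    rw [viAdj_ofAdj_inl] at h
    rcases h with rfl | rfl <;> simp [toTvi1, hab]
  · obtain ⟨a, b, hab, rfl⟩ := i.exists_ofAdj_eq
    obtain ⟨c, d, hcd, rfl⟩ := j.exists_ofAdj_eq
    simp only [toTvi1, Inc.other_ofAdj, tvi1_adj_one_one]
    obtain ⟨hne, rfl | he | rfl | rfl⟩ := (viAdj_ofAdj_ofAdj hab hcd).mp h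
    · exact ⟨fun hbd => hne ⟨rfl, hbd⟩, Or.inr ⟨a, hab.symm, hcd⟩⟩
    · obtain ⟨rfl, rfl⟩ | ⟨rfl, rfl⟩ := Sym2.eq_iff.mp he
      · exact absurd ⟨rfl, rfl⟩ hne
      · exact ⟨hcd.ne, Or.inl hcd⟩
    · exact ⟨hcd.ne, Or.inl hcd⟩
    · exact ⟨hab.ne', Or.inl hab.symm⟩

lemma toTvi1_of_mem_I2 {v : V} {i : Inc G} (hi : i ∈ I2 G v) : toTvi1 (.inr i) = (v, 1) := by
  obtain ⟨a, b, hab, rfl⟩ := i.exists_ofAdj_eq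
  rw [Inc.ofAdj_mem_I2_iff] at hi
  simp [toTvi1, hi]

lemma exists_isVISColoring_one_of_colorable (h : (Tvi1 G).Colorable k) :
    ∃ c : VIElem G → Fin k, IsVISColoring G 1 c := by
  obtain ⟨f⟩ := h
  refine ⟨f ∘ toTvi1, fun x y hxy => f.valid (tvi1_adj_toTvi1 hxy), fun v => ?_⟩
  have hsub : (fun i => f (toTvi1 (.inr i))) '' I2 G v ⊆ {f (v, 1)} := by
    rintro _ ⟨i, hi, rfl⟩
    simp [toTvi1_of_mem_I2 hi]
  simpa using Set.ncard_le_ncard hsub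

lemma IsVIColoring.one_lt {c : VIElem G → Fin k} (hc : IsVIColoring G c) {a b : V}
    (h : G.Adj a b) : 1 < k :=
  Fin.nontrivial_iff_two_le.mp ⟨⟨_, _, hc (.inl a) (.inr (Inc.ofAdj h)) (by simp)⟩⟩

lemma IsVISColoring.exists_color_I2 {c : VIElem G → Fin k} (hc : IsVISColoring G 1 c)
    (hk : 1 < k) (v : V) : ∃ t, (∀ i ∈ I2 G v, c (.inr i) = t) ∧ t ≠ c (.inl v) := by
  by_cases hv : (I2 G v).Nonempty
  · obtain ⟨i₀, hi₀⟩ := hv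
    refine ⟨c (.inr i₀), fun i hi => (Set.ncard_le_one (Set.toFinite _)).mp (hc.2 v)
      _ ⟨i, hi, rfl⟩ _ ⟨i₀, hi₀, rfl⟩, ?_⟩
    obtain ⟨a, b, hab, rfl⟩ := i₀.exists_ofAdj_eq
    rw [Inc.ofAdj_mem_I2_iff] at hi₀
    exact (hc.1 _ _ (by simp [hi₀])).symm
  · have : Nontrivial (Fin k) := Fin.nontrivial_iff_two_le.mpr hk
    obtain ⟨t, ht⟩ := exists_ne (c (.inl v))
    exact ⟨t, fun i hi => absurd ⟨i, hi⟩ hv, ht⟩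

lemma IsVISColoring.colorable_tvi1 {c : VIElem G → Fin k} (hc : IsVISColoring G 1 c)
    (hk : 1 < k) : (Tvi1 G).Colorable k := by
  choose t ht hne using hc.exists_color_I2 hk
  have ht_ofAdj {a b : V} (h : G.Adj a b) : c (.inr (Inc.ofAdj h)) = t b :=
    ht b _ ((Inc.ofAdj_mem_I2_iff h).mpr rfl)
  have hcross {a b : V} (h : a = b ∨ G.Adj a b) : c (.inl a) ≠ t b := by
    rcases h with rfl | h
    · exact (hne a).symm
    · rw [← ht_ofAdj h]
      exact hc.1 _ _ (by simp)
  refine ⟨.mk (fun p => if p.2 = 0 then c (.inl p.1) else t p.1) ?_⟩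
  rintro ⟨a, i⟩ ⟨b, j⟩ h
  fin_cases i <;> fin_cases j <;>
    simp only [Fin.zero_eta, Fin.mk_one, Fin.isValue, tvi1_adj_zero_zero, tvi1_adj_zero_one,
      tvi1_adj_one_zero, tvi1_adj_one_one, one_ne_zero, ↓reduceIte, ne_eq] at h ⊢
  · exact hc.1 _ _ h
  · exact hcross h
  · exact (hcross h).symm
  · obtain ⟨hab, h | ⟨m, ham, hmb⟩⟩ := h
    · rw [← ht_ofAdj h.symm, ← ht_ofAdj h]
      exact hc.1 _ _
        ((viAdj_ofAdj_ofAdj _ _).mpr ⟨fun h => hab h.2, Or.inr (Or.inl Sym2.eq_swap)⟩)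
    · rw [← ht_ofAdj ham.symm, ← ht_ofAdj hmb]
      exact hc.1 _ _ ((viAdj_ofAdj_ofAdj _ _).mpr ⟨fun h => hab h.2, Or.inl rfl⟩)

end Colorings

theorem chiVIS_one_eq_chromaticNumber_Tvi1_general {V : Type*} [Fintype V]
    (G : SimpleGraph V) (hG : G.edgeSet.Nonempty) :
    (chiVIS G 1 : ℕ∞) = (Tvi1 G).chromaticNumber := by
  obtain ⟨a, b, hab⟩ := ne_bot_iff_exists_adj.mp (edgeSet_nonempty.mp hG)
  have hset : {k | ∃ c : VIElem G → Fin k, IsVISColoring G 1 c} = {k | (Tvi1 G).Colorable k} :=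
    Set.ext fun _ => ⟨fun ⟨_, hc⟩ => hc.colorable_tvi1 (hc.1.one_lt hab),
      exists_isVISColoring_one_of_colorable⟩
  rw [chiVIS, hset, (Tvi1 G).colorable_of_fintype.chromaticNumber_eq_sInf]

/-- For every finite simple graph `G` with at least one edge,
`χ_{vi,1}(G) = χ(T_{vi,1}(G))`. -/
theorem chiVIS_one_eq_chromaticNumber_Tvi1 {V : Type*} [Fintype V] [DecidableEq V]
    (G : SimpleGraph V) (hG : G.edgeSet.Nonempty) :
    (chiVIS G 1 : ℕ∞) = (Tvi1 G).chromaticNumber :=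
  chiVIS_one_eq_chromaticNumber_Tvi1_general G hG
end

section
/- For every finite simple graph G, χ_vi(G) ≤ χ''(G) + st(G), where χ''(G) is the total chromatic number of G and st(G) is the star arboricity of G. -/
open SimpleGraph

variable {V : Type*}

/-- A proper total `k`-coloring of `G`: adjacent vertices, incident vertex/edge pairs, and
distinct edges sharing an endpoint all receive distinct colors. -/
def IsTotalColoring (G : SimpleGraph V) {k : ℕ} (c : V ⊕ G.edgeSet → Fin k) : Prop :=
  (∀ u w, G.Adj u w → c (Sum.inl u) ≠ c (Sum.inl w)) ∧
  (∀ (v : V) (e : G.edgeSet), v ∈ (e : Sym2 V) → c (Sum.inl v) ≠ c (Sum.inr e)) ∧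
  (∀ e f : G.edgeSet, e ≠ f → (∃ v : V, v ∈ (e : Sym2 V) ∧ v ∈ (f : Sym2 V)) →
    c (Sum.inr e) ≠ c (Sum.inr f))

/-- The total chromatic number `χ''(G)`. -/
noncomputable def totalChromatic (G : SimpleGraph V) : ℕ :=
  sInf {k | ∃ c : V ⊕ G.edgeSet → Fin k, IsTotalColoring G c}

/-- A graph is a star forest iff each of its connected components is a star (a tree of
diameter at most 2); equivalently, it contains no walk `a, b, c, d` with `a ≠ c` and
`b ≠ d` (this excludes both paths with three edges and triangles). -/
def IsStarForest {W : Type*} (H : SimpleGraph W) : Prop :=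
  ∀ a b c d : W, H.Adj a b → H.Adj b c → H.Adj c d → a = c ∨ b = d

/-- The star arboricity `st(G)`: the minimum number of star forests in `G` whose union
covers all edges of `G`. -/
noncomputable def starArboricity (G : SimpleGraph V) : ℕ :=
  sInf {n | ∃ F : Fin n → SimpleGraph V, (∀ i, F i ≤ G) ∧ (∀ i, IsStarForest (F i)) ∧
    ∀ e ∈ G.edgeSet, ∃ i, e ∈ (F i).edgeSet}


/-!
Fix a proper total coloring `φ` with `χ''(G)` colors and a cover of `E(G)` by star forests
`F₀, …, F_{st(G)-1}`, assigning to each edge `e` a forest `F_{j(e)}` containing it. Color a vertex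
`v` by `φ(v)`, an incidence `(v, e)` by `φ(e)` when `v` is the center of `e` in its star, and by
the fresh color `j(e)` otherwise. Incidences at centers inherit properness from `φ`, since
adjacent incidences lie on edges sharing a vertex. Two adjacent incidences with the same fresh
color are leaves of edges of one star forest; but adjacency forces them onto one edge (whose
two ends cannot both be leaves) or onto two edges sharing a vertex, which is then the center.
-/

open Classical in
/-- In a star forest, the endpoint of `e` shared with another edge; an arbitrary endpoint if
there is none. -/
noncomputable def starCenter (H : SimpleGraph V) (e : Sym2 V) : V :=
  if h : ∃ x ∈ e, ∃ f ∈ H.edgeSet, f ≠ e ∧ x ∈ f then h.choose else e.out.1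

lemma starCenter_mem (H : SimpleGraph V) (e : Sym2 V) : starCenter H e ∈ e := by
  unfold starCenter
  split_ifs with h
  · exact h.choose_spec.1
  · exact Sym2.out_fst_mem e

namespace IsStarForest

variable {H : SimpleGraph V}

lemma eq_of_mem_of_mem (hH : IsStarForest H) {e f g : Sym2 V} (he : e ∈ H.edgeSet)
    (hf : f ∈ H.edgeSet) (hg : g ∈ H.edgeSet) (hfe : f ≠ e) (hge : g ≠ e) {x v : V}
    (hxe : x ∈ e) (hxf : x ∈ f) (hve : v ∈ e) (hvg : v ∈ g) : x = v := by
  by_contra hxv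
  obtain rfl := (Sym2.mem_and_mem_iff hxv).1 ⟨hxe, hve⟩
  obtain ⟨y, rfl⟩ := Sym2.mem_iff_exists.1 hxf
  obtain ⟨w, rfl⟩ := Sym2.mem_iff_exists.1 hvg
  rcases hH y x v w (H.adj_symm hf) he hg with rfl | rfl
  · exact hfe rfl
  · exact hge Sym2.eq_swap

lemma starCenter_eq (hH : IsStarForest H) {e f : Sym2 V} (he : e ∈ H.edgeSet)
    (hf : f ∈ H.edgeSet) (hfe : f ≠ e) {v : V} (hve : v ∈ e) (hvf : v ∈ f) :
    starCenter H e = v := by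
  have h : ∃ x ∈ e, ∃ f ∈ H.edgeSet, f ≠ e ∧ x ∈ f := ⟨v, hve, f, hf, hfe, hvf⟩
  obtain ⟨hxe, g, hg, hge, hxg⟩ := h.choose_spec
  rw [starCenter, dif_pos h]
  exact hH.eq_of_mem_of_mem he hg hf hge hfe hxe hxg hve hvf

lemma eq_starCenter_or_eq_starCenter (hH : IsStarForest H) {v w : V} {e f : Sym2 V}
    (he : e ∈ H.edgeSet) (hf : f ∈ H.edgeSet) (hv : v ∈ e) (hw : w ∈ f) (hne : (v, e) ≠ (w, f))
    (hadj : v = w ∨ e = f ∨ s(v, w) = e ∨ s(v, w) = f) :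
    v = starCenter H e ∨ w = starCenter H f := by
  by_cases hef : e = f
  · subst hef
    have hvw : v ≠ w := fun hvw => hne (by rw [hvw])
    have hc : starCenter H e ∈ s(v, w) :=
      (Sym2.mem_and_mem_iff hvw).1 ⟨hv, hw⟩ ▸ starCenter_mem H e
    exact (Sym2.mem_iff.1 hc).imp Eq.symm Eq.symm
  rcases hadj with rfl | h | h | h
  · exact .inl (hH.starCenter_eq he hf (Ne.symm hef) hv hw).symm
  · exact absurd h hef
  · exact .inr (hH.starCenter_eq hf he hef hw (h ▸ Sym2.mem_mk_right v w)).symm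
  · exact .inl (hH.starCenter_eq he hf (Ne.symm hef) hv (h ▸ Sym2.mem_mk_left v w)).symm

end IsStarForest

lemma exists_mem_mem_of_incidence_adj {v w : V} {e f : Sym2 V} (hv : v ∈ e) (hw : w ∈ f)
    (hadj : v = w ∨ e = f ∨ s(v, w) = e ∨ s(v, w) = f) : ∃ x, x ∈ e ∧ x ∈ f := by
  rcases hadj with rfl | rfl | rfl | rfl
  · exact ⟨v, hv, hw⟩
  · exact ⟨v, hv, hv⟩
  · exact ⟨w, Sym2.mem_mk_right v w, hw⟩
  · exact ⟨v, hv, Sym2.mem_mk_left v w⟩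

def SimpleGraph.starAt (G : SimpleGraph V) (v : V) : SimpleGraph V where
  Adj a b := G.Adj a b ∧ (a = v ∨ b = v)
  symm.symm _ _ h := ⟨h.1.symm, h.2.symm⟩
  loopless.irrefl _ h := G.irrefl h.1

lemma SimpleGraph.isStarForest_starAt (G : SimpleGraph V) (v : V) :
    IsStarForest (G.starAt v) := by
  rintro a b c d ⟨hab, rfl | rfl⟩ ⟨hbc, hb | rfl⟩ ⟨hcd, hc | rfl⟩ <;> grind [G.irrefl]

lemma exists_starForest_cover [Finite V] (G : SimpleGraph V) :
    ∃ n, ∃ F : Fin n → SimpleGraph V, (∀ i, F i ≤ G) ∧ (∀ i, IsStarForest (F i)) ∧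
      ∀ e ∈ G.edgeSet, ∃ i, e ∈ (F i).edgeSet := by
  let σ := Finite.equivFin V
  refine ⟨Nat.card V, fun i => G.starAt (σ.symm i), fun i a b h => h.1,
    fun i => G.isStarForest_starAt _, ?_⟩
  rintro ⟨a, b⟩ hab
  exact ⟨σ a, hab, .inl (σ.symm_apply_apply a).symm⟩

lemma isTotalColoring_of_injective {G : SimpleGraph V} {k : ℕ} {c : V ⊕ G.edgeSet → Fin k}
    (hc : c.Injective) : IsTotalColoring G c :=
  ⟨fun _ _ h => hc.ne (by simpa using h.ne), fun _ _ _ => hc.ne (by simp),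
    fun _ _ hne _ => hc.ne (by simpa using hne)⟩

lemma exists_totalColoring [Finite V] (G : SimpleGraph V) :
    ∃ k, ∃ c : V ⊕ G.edgeSet → Fin k, IsTotalColoring G c :=
  ⟨_, _, isTotalColoring_of_injective (Finite.equivFin (V ⊕ G.edgeSet)).injective⟩

section CoverColoring

variable {G : SimpleGraph V} {k n : ℕ}

def Inc.edge (i : Inc G) : G.edgeSet := ⟨i.1.2, i.2.1⟩

open Classical in
noncomputable def coverColoring (φ : V ⊕ G.edgeSet → Fin k) (F : Fin n → SimpleGraph V)
    (j : G.edgeSet → Fin n) : VIElem G → Fin k ⊕ Fin n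
  | .inl v => .inl (φ (.inl v))
  | .inr i => if i.1.1 = starCenter (F (j i.edge)) i.1.2 then .inl (φ (.inr i.edge))
      else .inr (j i.edge)

variable {φ : V ⊕ G.edgeSet → Fin k} {F : Fin n → SimpleGraph V} {j : G.edgeSet → Fin n}

lemma coverColoring_inr_ne (hφ : IsTotalColoring G φ) (hF : ∀ m, IsStarForest (F m))
    (hj : ∀ e, (e : Sym2 V) ∈ (F (j e)).edgeSet) {i i' : Inc G}
    (hadj : VIAdj G (.inr i) (.inr i')) :
    coverColoring φ F j (.inr i) ≠ coverColoring φ F j (.inr i') := by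
  obtain ⟨hne, hadj⟩ := hadj
  have hne' : (i.1.1, i.1.2) ≠ (i'.1.1, i'.1.2) := fun h => hne (Subtype.ext h)
  simp only [coverColoring]
  split_ifs with h h' h'
  · have hedge : i.edge ≠ i'.edge := by
      intro hii'
      have hs : i.1.2 = i'.1.2 := congrArg Subtype.val hii'
      exact hne' (Prod.ext (by rw [h, h', hii', hs]) hs)
    simpa using hφ.2.2 _ _ hedge (exists_mem_mem_of_incidence_adj i.2.2 i'.2.2 hadj)
  · simp
  · simp
  · simp only [ne_eq, Sum.inr.injEq]
    intro hm
    rw [← hm] at h'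
    exact ((hF _).eq_starCenter_or_eq_starCenter (hj i.edge) (hm ▸ hj i'.edge) i.2.2 i'.2.2
      hne' hadj).elim h h'

lemma coverColoring_ne (hφ : IsTotalColoring G φ) (hF : ∀ m, IsStarForest (F m))
    (hj : ∀ e, (e : Sym2 V) ∈ (F (j e)).edgeSet) {a b : VIElem G} (hab : VIAdj G a b) :
    coverColoring φ F j a ≠ coverColoring φ F j b := by
  rcases a with u | i <;> rcases b with w | i'
  · simpa [coverColoring] using hφ.1 u w hab
  · simp only [coverColoring]
    split_ifs
    · simpa using hφ.2.1 u i'.edge hab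
    · simp
  · simp only [coverColoring]
    split_ifs
    · simpa using (hφ.2.1 w i.edge hab).symm
    · simp
  · exact coverColoring_inr_ne hφ hF hj hab

end CoverColoring

theorem chiVI_le_totalChromatic_add_starArboricity_general {V : Type*} [Fintype V]
    (G : SimpleGraph V) :
    chiVI G ≤ totalChromatic G + starArboricity G := by
  obtain ⟨φ, hφ⟩ := Nat.sInf_mem (exists_totalColoring G)
  obtain ⟨F, -, hF, hcover⟩ := Nat.sInf_mem (exists_starForest_cover G)
  choose j hj using fun e : G.edgeSet => hcover e e.2
  exact Nat.sInf_le ⟨finSumFinEquiv ∘ coverColoring φ F j,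
    fun a b hab => finSumFinEquiv.injective.ne (coverColoring_ne hφ hF hj hab)⟩

/-- For every finite simple graph `G`,
`χ_vi(G) ≤ χ''(G) + st(G)`. -/
theorem chiVI_le_totalChromatic_add_starArboricity {V : Type*} [Fintype V] [DecidableEq V]
    (G : SimpleGraph V) :
    chiVI G ≤ totalChromatic G + starArboricity G :=
  chiVI_le_totalChromatic_add_starArboricity_general G
end

section
/- Let k be a positive integer and let G be a k-degenerate finite simple graph with maximum degree Δ(G) ≥ 2. Then χ_{vi,k}(G) ≤ Δ(G) + 2k. -/
open SimpleGraph

variable {V : Type*}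

/-- A graph is `k`-degenerate if every (nonempty, induced) subgraph has a vertex of degree
at most `k`; the degree of `v` in the subgraph induced on `s ∋ v` is `|N_G(v) ∩ s|`. -/
def Degenerate (k : ℕ) (G : SimpleGraph V) : Prop :=
  ∀ s : Set V, s.Nonempty → ∃ v ∈ s, (G.neighborSet v ∩ s).ncard ≤ k


/-!
Colour along a degeneracy order. Remove a vertex `u` with a set `W` of at most `k` neighbours,
colour the rest by induction, keeping at most `k` colours on every `I₂(v)`, and then colour the
incidences `(u, uw)`, `(w, wu)` and finally `u`. The incidences `(u, uw)` get distinct colours,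
taken from `I₂(w)` whenever possible, so that `I₂(w)` still carries at most `k` colours. Each
`(w, wu)` has fewer than `Δ + 2k` forbidden colours. The vertex `u` must avoid the at most `3|W|`
colours on `W` and on these incidences, which is fewer than `Δ + 2k` unless `|W| = k = Δ`. In
that case, since `Δ ≥ 2` and the colours of the `(u, uw)` meet `I₂(w)`, some `(w, wu)` has two
spare colours and can be made to repeat a colour that `u` has to avoid anyway.
-/

open Finset

namespace Finset

variable {ι α : Type*}

theorem exists_notMem_of_card_lt [Fintype α] {s : Finset α} (h : #s < Fintype.card α) :
    ∃ x, x ∉ s := by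
  obtain ⟨x, -, hx⟩ := exists_mem_notMem_of_card_lt_card (s := s) (t := univ) (by rwa [card_univ])
  exact ⟨x, hx⟩

variable [DecidableEq α]

theorem card_insert_union_union_image_le [DecidableEq ι] {W : Finset ι} {w : ι} (hw : w ∈ W)
    (c : α) (O I : Finset α) (h : ι → α) :
    #(insert c (O ∪ I ∪ W.image h)) ≤ #O + #(insert (h w) I) + #W := by
  have hsplit : I ∪ W.image h = insert (h w) I ∪ (W.erase w).image h := by
    rw [insert_union, ← union_insert, ← image_insert, insert_erase hw]
  rw [union_assoc, hsplit]
  have := card_insert_le c (O ∪ (insert (h w) I ∪ (W.erase w).image h))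
  have := card_union_le O (insert (h w) I ∪ (W.erase w).image h)
  have := card_union_le (insert (h w) I) ((W.erase w).image h)
  have := card_image_le (s := W.erase w) (f := h)
  have := card_erase_add_one hw
  omega

theorem card_insert_union_union_image_le_of_meet (W : Finset ι) (c : α) (O I : Finset α)
    (h : ι → α) (hI : I.Nonempty → ∃ x ∈ W, h x ∈ I) :
    #(insert c (O ∪ I ∪ W.image h)) ≤ #O + max #I 1 + #W := by
  rw [union_assoc]
  have := card_insert_le c (O ∪ (I ∪ W.image h))
  have := card_union_le O (I ∪ W.image h)
  have := card_image_le (s := W) (f := h)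
  have := card_union_add_card_inter I (W.image h)
  rcases I.eq_empty_or_nonempty with hI0 | hne
  · simp only [hI0, card_empty] at *
    omega
  · obtain ⟨x, hx, hxI⟩ := hI hne
    have : 0 < #(I ∩ W.image h) := card_pos.2 ⟨h x, mem_inter.2 ⟨hxI, mem_image_of_mem h hx⟩⟩
    omega

variable [DecidableEq ι] [Fintype α]

theorem exists_notMem_preferring (k : ℕ) (F P X : Finset α) (hX : #X + 1 ≤ k) (hP : #P ≤ k)
    (hPF : Disjoint P F) (hF : #F + 2 * k ≤ Fintype.card α) :
    ∃ x, x ∉ F ∧ x ∉ X ∧ #(insert x P) ≤ k ∧ (P.Nonempty → x ∈ P ∨ ∃ y ∈ X, y ∈ P) := by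
  by_cases hfree : ∃ x ∈ P, x ∉ F ∪ X
  · obtain ⟨x, hxP, hx⟩ := hfree
    rw [mem_union, not_or] at hx
    exact ⟨x, hx.1, hx.2, by rwa [insert_eq_of_mem hxP], fun _ => .inl hxP⟩
  -- otherwise `P` is used up by `X`, hence small, and a fresh colour will do
  have hPX : P ⊆ X := fun y hy => by
    have := disjoint_left.1 hPF hy
    grind
  obtain ⟨x, hx⟩ := exists_notMem_of_card_lt (s := F ∪ X ∪ P) (by
    have := card_union_le (F ∪ X) P
    have := card_union_le F X
    omega)
  simp only [mem_union, not_or] at hx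
  refine ⟨x, hx.1.1, hx.1.2, ?_, fun ⟨y, hy⟩ => .inr ⟨y, hPX hy, hy⟩⟩
  have := card_le_card hPX
  have := card_insert_le x P
  omega

variable [Nonempty α]

theorem exists_injOn_notMem_preferring (k : ℕ) (W : Finset ι) (F P : ι → Finset α)
    (hW : #W ≤ k) (hP : ∀ w ∈ W, #(P w) ≤ k) (hPF : ∀ w ∈ W, Disjoint (P w) (F w))
    (hF : ∀ w ∈ W, #(F w) + 2 * k ≤ Fintype.card α) :
    ∃ f : ι → α, Set.InjOn f W ∧ (∀ w ∈ W, f w ∉ F w) ∧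
      (∀ w ∈ W, #(insert (f w) (P w)) ≤ k) ∧
      (∀ w ∈ W, (P w).Nonempty → ∃ x ∈ W, f x ∈ P w) := by
  induction W using Finset.induction_on with
  | empty => exact ⟨fun _ => Classical.arbitrary α, by simp, by simp, by simp, by simp⟩
  | @insert a T haT ih =>
    obtain ⟨f, hinj, hfF, hcard, hmeet⟩ := ih (by grind) (by grind) (by grind) (by grind)
    have ha := mem_insert_self a T
    obtain ⟨x, hxF, hxT, hxP, hxmeet⟩ := exists_notMem_preferring k (F a) (P a) (T.image f)
      (card_image_le.trans_lt (by rw [card_insert_of_notMem haT] at hW; omega))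
      (hP a ha) (hPF a ha) (hF a ha)
    have hupd : ∀ y ∈ T, Function.update f a x y = f y := fun y hy =>
      Function.update_of_ne (ne_of_mem_of_not_mem hy haT) _ _
    refine ⟨Function.update f a x, ?_, ?_, ?_, ?_⟩
    · rw [coe_insert, Set.injOn_insert (by simpa using haT)]
      refine ⟨fun y hy z hz h => hinj hy hz (by rwa [hupd y hy, hupd z hz] at h), ?_⟩
      rintro ⟨y, hy, h⟩
      rw [hupd y hy, Function.update_self] at h
      exact hxT (mem_image.2 ⟨y, hy, h⟩)
    · intro y hy
      rcases mem_insert.1 hy with rfl | hy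
      · simpa using hxF
      · rw [hupd y hy]; exact hfF y hy
    · intro y hy
      rcases mem_insert.1 hy with rfl | hy
      · simpa using hxP
      · rw [hupd y hy]; exact hcard y hy
    · intro y hy hne
      rcases mem_insert.1 hy with rfl | hy
      · rcases hxmeet hne with h | ⟨_, hzT, h⟩
        · exact ⟨y, hy, by simpa using h⟩
        · obtain ⟨z, hz, rfl⟩ := mem_image.1 hzT
          exact ⟨z, mem_insert_of_mem hz, by rwa [hupd z hz]⟩
      · obtain ⟨z, hz, h⟩ := hmeet y hy hne
        exact ⟨z, mem_insert_of_mem hz, by rwa [hupd z hz]⟩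

/-- Either `h a` can repeat a colour of `D` or of `h` on `W \ {a}`, or all these colours lie in
`F a`, and then there are at most `#(F a) + 1` of them. -/
theorem exists_notMem_card_union_image_lt (W : Finset ι) (D : Finset α) (F : ι → Finset α)
    (hF : ∀ w ∈ W, #(F w) < Fintype.card α) (hD : #D + #W ≤ Fintype.card α)
    (hlt : #D + #W < Fintype.card α ∨ ∃ a ∈ W, #(F a) + 2 ≤ Fintype.card α) :
    ∃ h : ι → α, (∀ w ∈ W, h w ∉ F w) ∧ #(D ∪ W.image h) < Fintype.card α := by
  choose! h₀ hh₀ using fun w hw => exists_notMem_of_card_lt (hF w hw)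
  rcases hlt with hlt | ⟨a, ha, haF⟩
  · refine ⟨h₀, hh₀, ?_⟩
    have := card_union_le D (W.image h₀)
    have := card_image_le (s := W) (f := h₀)
    omega
  have hsplit : ∀ g : ι → α, D ∪ W.image g = insert (g a) (D ∪ (W.erase a).image g) := by
    intro g
    rw [← union_insert, ← image_insert, insert_erase ha]
  have hR : #(D ∪ (W.erase a).image h₀) + 1 ≤ #D + #W := by
    have := card_union_le D ((W.erase a).image h₀)
    have := card_image_le (s := W.erase a) (f := h₀)
    have := card_erase_add_one ha
    omega
  by_cases hRF : D ∪ (W.erase a).image h₀ ⊆ F a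
  · refine ⟨h₀, hh₀, ?_⟩
    rw [hsplit]
    have := card_le_card hRF
    have := card_insert_le (h₀ a) (D ∪ (W.erase a).image h₀)
    omega
  · obtain ⟨x, hxR, hxF⟩ := not_subset.1 hRF
    have hupd : ∀ w ∈ W.erase a, Function.update h₀ a x w = h₀ w :=
      fun w hw => Function.update_of_ne (ne_of_mem_erase hw) _ _
    refine ⟨Function.update h₀ a x, fun w hw => ?_, ?_⟩
    · rcases eq_or_ne w a with rfl | hwa
      · simpa using hxF
      · rw [hupd w (mem_erase.2 ⟨hwa, hw⟩)]
        exact hh₀ w hw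
    · rw [hsplit, image_congr hupd, Function.update_self, insert_eq_of_mem hxR]
      omega

end Finset

theorem Degenerate.exists_card_filter_adj_le {k : ℕ} {G : SimpleGraph V} [DecidableRel G.Adj]
    (h : Degenerate k G) {s : Finset V} (hs : s.Nonempty) :
    ∃ u ∈ s, #{w ∈ s | G.Adj u w} ≤ k := by
  obtain ⟨u, hu, huk⟩ := h s (coe_nonempty.2 hs)
  refine ⟨u, hu, le_of_eq_of_le ?_ huk⟩
  rw [← Set.ncard_coe_finset, coe_filter, Set.inter_comm]
  rfl

namespace SimpleGraph

variable {α : Type*} (G : SimpleGraph V)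

/-- `f` colours the vertices and `g a b` the incidence `(a, ab)`. The fields are the
adjacencies of `VIAdj`, restricted to the subgraph induced by `s`. -/
structure IsIncColoringOn (s : Finset V) (f : V → α) (g : V → V → α) : Prop where
  adj ⦃a b : V⦄ : a ∈ s → b ∈ s → G.Adj a b → f a ≠ f b
  tail ⦃a b : V⦄ : a ∈ s → b ∈ s → G.Adj a b → f a ≠ g a b
  head ⦃a b : V⦄ : a ∈ s → b ∈ s → G.Adj a b → f b ≠ g a b
  star ⦃a b d : V⦄ : a ∈ s → b ∈ s → d ∈ s → G.Adj a b → G.Adj a d → b ≠ d → g a b ≠ g a d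
  path ⦃a b d : V⦄ : a ∈ s → b ∈ s → d ∈ s → G.Adj a b → G.Adj b d → g a b ≠ g b d

variable {G} [DecidableRel G.Adj]

theorem card_filter_adj_le_degree [Fintype V] (s : Finset V) (u : V) :
    #{x ∈ s | G.Adj u x} ≤ G.degree u := by
  rw [← card_neighborFinset_eq_degree, neighborFinset_eq_filter]
  exact card_le_card (filter_subset_filter _ (subset_univ s))

theorem card_filter_adj_add_one_le_degree [Fintype V] [DecidableEq V] {s : Finset V} {u w : V}
    (hu : u ∉ s) (h : G.Adj w u) : #{x ∈ s | G.Adj w x} + 1 ≤ G.degree w := by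
  rw [← card_neighborFinset_eq_degree,
    ← card_insert_of_notMem fun hu' => hu (mem_filter.1 hu').1]
  refine card_le_card fun x hx => ?_
  rcases mem_insert.1 hx with rfl | hx
  · exact (mem_neighborFinset _ _ _).2 h
  · exact (mem_neighborFinset _ _ _).2 (mem_filter.1 hx).2

variable (G) [DecidableEq α]

def outColors (s : Finset V) (g : V → V → α) (w : V) : Finset α :=
  {x ∈ s | G.Adj w x}.image (g w)

/-- The colours on `I₂(w)` inside `s`. -/
def inColors (s : Finset V) (g : V → V → α) (w : V) : Finset α :=
  {x ∈ s | G.Adj w x}.image (g · w)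

variable {G}

theorem IsIncColoringOn.disjoint_inColors {s : Finset V} {f : V → α} {g : V → V → α}
    (hc : G.IsIncColoringOn s f g) {w : V} (hw : w ∈ s) :
    Disjoint (G.inColors s g w) (insert (f w) (G.outColors s g w)) := by
  rw [Finset.disjoint_left]
  simp only [inColors, outColors, mem_image, mem_filter, mem_insert]
  rintro _ ⟨x, ⟨hx, hwx⟩, rfl⟩ (h | ⟨y, ⟨hy, hwy⟩, h⟩)
  · exact hc.head hx hw hwx.symm h.symm
  · exact hc.path hx hw hy hwx.symm hwy h.symm

variable [DecidableEq V]

def extendInc (g : V → V → α) (u : V) (gOut gIn : V → α) (a b : V) : α :=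
  if a = u then gOut b else if b = u then gIn a else g a b

theorem IsIncColoringOn.extend {s : Finset V} {f : V → α} {g : V → V → α}
    (hc : G.IsIncColoringOn s f g) {u : V} (hu : u ∉ s) {cu : α} {gOut gIn : V → α}
    (hcu : cu ∉ {w ∈ s | G.Adj u w}.image f ∪ {w ∈ s | G.Adj u w}.image gOut ∪
      {w ∈ s | G.Adj u w}.image gIn)
    (hOut : ∀ w ∈ {w ∈ s | G.Adj u w}, gOut w ∉ insert (f w) (G.outColors s g w))
    (hOutInj : Set.InjOn gOut ({w ∈ s | G.Adj u w} : Finset V))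
    (hIn : ∀ w ∈ {w ∈ s | G.Adj u w}, gIn w ∉ insert (f w)
      (G.outColors s g w ∪ G.inColors s g w ∪ {w ∈ s | G.Adj u w}.image gOut)) :
    G.IsIncColoringOn (insert u s) (Function.update f u cu) (extendInc g u gOut gIn) := by
  simp only [mem_union, mem_image, mem_filter, not_or, not_exists, not_and, and_imp] at hcu
  simp only [mem_filter, mem_insert, mem_union, mem_image, outColors, inColors, not_or,
    not_exists, not_and, and_imp] at hOut hIn
  simp only [Set.InjOn, coe_filter, Set.mem_ofPred_eq, and_imp] at hOutInj
  have mem : ∀ {x}, x ∈ insert u s → x = u ∨ x ∈ s ∧ x ≠ u := by grind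
  have := G.adj_comm
  have := G.loopless.irrefl
  -- in each case, according to which of the elements is `u`, one hypothesis applies
  constructor
  · intro a b ha hb hab
    rcases mem ha with rfl | ⟨has, hau⟩ <;> rcases mem hb with rfl | ⟨hbs, hbu⟩ <;>
      grind [extendInc, IsIncColoringOn]
  · intro a b ha hb hab
    rcases mem ha with rfl | ⟨has, hau⟩ <;> rcases mem hb with rfl | ⟨hbs, hbu⟩ <;>
      grind [extendInc, IsIncColoringOn]
  · intro a b ha hb hab
    rcases mem ha with rfl | ⟨has, hau⟩ <;> rcases mem hb with rfl | ⟨hbs, hbu⟩ <;>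
      grind [extendInc, IsIncColoringOn]
  · intro a b d ha hb hd hab had hbd
    rcases mem ha with rfl | ⟨has, hau⟩ <;> rcases mem hb with rfl | ⟨hbs, hbu⟩ <;>
      rcases mem hd with rfl | ⟨hds, hdu⟩ <;> grind [extendInc, IsIncColoringOn]
  · intro a b d ha hb hd hab had
    rcases mem ha with rfl | ⟨has, hau⟩ <;> rcases mem hb with rfl | ⟨hbs, hbu⟩ <;>
      rcases mem hd with rfl | ⟨hds, hdu⟩ <;> grind [extendInc, IsIncColoringOn]

section ExtendInc

variable {s : Finset V} {g : V → V → α} {u v : V} {gOut gIn : V → α}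

theorem inColors_extendInc_self (hu : u ∉ s) :
    G.inColors (insert u s) (extendInc g u gOut gIn) u = {w ∈ s | G.Adj u w}.image gIn := by
  rw [inColors, filter_insert, if_neg (G.irrefl)]
  refine image_congr fun x hx => ?_
  have hxu : x ≠ u := fun h => hu (h ▸ (mem_filter.1 hx).1)
  simp [extendInc, hxu]

theorem inColors_extendInc_of_adj (hu : u ∉ s) (hv : v ∈ s) (h : G.Adj v u) :
    G.inColors (insert u s) (extendInc g u gOut gIn) v = insert (gOut v) (G.inColors s g v) := by
  have hvu : v ≠ u := fun h => hu (h ▸ hv)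
  rw [inColors, filter_insert, if_pos h, image_insert, inColors]
  refine congr (by simp [extendInc]) (image_congr fun x hx => ?_)
  have hxu : x ≠ u := fun h => hu (h ▸ (mem_filter.1 hx).1)
  simp [extendInc, hxu, hvu]

theorem inColors_extendInc_of_not_adj (hu : u ∉ s) (hv : v ∈ s) (h : ¬G.Adj v u) :
    G.inColors (insert u s) (extendInc g u gOut gIn) v = G.inColors s g v := by
  have hvu : v ≠ u := fun h => hu (h ▸ hv)
  rw [inColors, filter_insert, if_neg h, inColors]
  refine image_congr fun x hx => ?_
  have hxu : x ≠ u := fun h => hu (h ▸ (mem_filter.1 hx).1)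
  simp [extendInc, hxu, hvu]

theorem card_inColors_extendInc_le {k : ℕ} (hu : u ∉ s)
    (hinv : ∀ v ∈ s, #(G.inColors s g v) ≤ k) (huk : #{w ∈ s | G.Adj u w} ≤ k)
    (hOut : ∀ w ∈ {w ∈ s | G.Adj u w}, #(insert (gOut w) (G.inColors s g w)) ≤ k) :
    ∀ v ∈ insert u s, #(G.inColors (insert u s) (extendInc g u gOut gIn) v) ≤ k := by
  intro v hv
  rcases mem_insert.1 hv with rfl | hv
  · rw [inColors_extendInc_self hu]
    exact card_image_le.trans huk
  by_cases h : G.Adj v u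
  · rw [inColors_extendInc_of_adj hu hv h]
    exact hOut v (mem_filter.2 ⟨hv, h.symm⟩)
  · rw [inColors_extendInc_of_not_adj hu hv h]
    exact hinv v hv

end ExtendInc

variable [Fintype V] [Fintype α] {k Δ : ℕ}

theorem IsIncColoringOn.exists_extend (hk : 1 ≤ k) (hΔ : 2 ≤ Δ) (hdegΔ : ∀ v, G.degree v ≤ Δ)
    (hα : Δ + 2 * k ≤ Fintype.card α) {s : Finset V} {f : V → α} {g : V → V → α}
    (hc : G.IsIncColoringOn s f g) (hinv : ∀ v ∈ s, #(G.inColors s g v) ≤ k) {u : V}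
    (hu : u ∉ s) (huk : #{w ∈ s | G.Adj u w} ≤ k) :
    ∃ (f' : V → α) (g' : V → V → α), G.IsIncColoringOn (insert u s) f' g' ∧
      ∀ v ∈ insert u s, #(G.inColors (insert u s) g' v) ≤ k := by
  have : Nonempty α := Fintype.card_pos_iff.1 (by omega)
  set W := {w ∈ s | G.Adj u w}
  have hWs : ∀ w ∈ W, w ∈ s ∧ G.Adj u w := fun w hw => mem_filter.1 hw
  have hWΔ : #W ≤ Δ := (card_filter_adj_le_degree s u).trans (hdegΔ u)
  have hnbr : ∀ w ∈ W, #{x ∈ s | G.Adj w x} + 1 ≤ Δ := fun w hw =>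
    (card_filter_adj_add_one_le_degree hu (hWs w hw).2.symm).trans (hdegΔ w)
  have hout : ∀ w ∈ W, #(G.outColors s g w) + 1 ≤ Δ := fun w hw =>
    (Nat.add_le_add_right card_image_le 1).trans (hnbr w hw)
  have hin : ∀ w ∈ W, #(G.inColors s g w) + 1 ≤ Δ := fun w hw =>
    (Nat.add_le_add_right card_image_le 1).trans (hnbr w hw)
  obtain ⟨gOut, hOutInj, hOut, hOutk, hOutMeet⟩ := exists_injOn_notMem_preferring k W
    (fun w => insert (f w) (G.outColors s g w)) (G.inColors s g) huk
    (fun w hw => hinv w (hWs w hw).1) (fun w hw => hc.disjoint_inColors (hWs w hw).1)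
    (fun w hw => by have := card_insert_le (f w) (G.outColors s g w); have := hout w hw; omega)
  have hD : #(W.image f ∪ W.image gOut) ≤ 2 * #W := by
    have := card_union_le (W.image f) (W.image gOut)
    have := card_image_le (s := W) (f := f)
    have := card_image_le (s := W) (f := gOut)
    omega
  have hlt : #(W.image f ∪ W.image gOut) + #W < Fintype.card α ∨ ∃ a ∈ W,
      #(insert (f a) (G.outColors s g a ∪ G.inColors s g a ∪ W.image gOut)) + 2 ≤
        Fintype.card α := by
    by_cases h3 : 3 * #W < Δ + 2 * k
    · left; omega
    -- now `#W = k = Δ ≥ 2`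
    obtain ⟨a, ha⟩ : W.Nonempty := card_pos.1 (by omega)
    have := card_insert_union_union_image_le_of_meet W (f a) (G.outColors s g a)
      (G.inColors s g a) gOut (hOutMeet a ha)
    have := hout a ha
    have := hin a ha
    exact .inr ⟨a, ha, by omega⟩
  obtain ⟨gIn, hIn, hcard⟩ := exists_notMem_card_union_image_lt W _ _ (fun w hw => by
    have := card_insert_union_union_image_le hw (f w) (G.outColors s g w) (G.inColors s g w) gOut
    have := hOutk w hw
    have := hout w hw
    omega) (by omega) hlt
  obtain ⟨cu, hcu⟩ := exists_notMem_of_card_lt hcard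
  exact ⟨_, _, hc.extend hu hcu hOut hOutInj hIn,
    card_inColors_extendInc_le hu hinv huk hOutk⟩

theorem exists_isIncColoringOn (hk : 1 ≤ k) (hΔ : 2 ≤ Δ) (hdeg : Degenerate k G)
    (hdegΔ : ∀ v, G.degree v ≤ Δ) (hα : Δ + 2 * k ≤ Fintype.card α) (s : Finset V) :
    ∃ (f : V → α) (g : V → V → α), G.IsIncColoringOn s f g ∧
      ∀ v ∈ s, #(G.inColors s g v) ≤ k := by
  induction s using Finset.strongInduction with
  | H s ih =>
  rcases s.eq_empty_or_nonempty with rfl | hs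
  · obtain ⟨c⟩ : Nonempty α := Fintype.card_pos_iff.1 (by omega)
    exact ⟨fun _ => c, fun _ _ => c, ⟨by simp, by simp, by simp, by simp, by simp⟩, by simp⟩
  obtain ⟨u, hu, huk⟩ := hdeg.exists_card_filter_adj_le hs
  obtain ⟨f, g, hc, hinv⟩ := ih (s.erase u) (erase_ssubset hu)
  rw [← insert_erase hu]
  exact hc.exists_extend hk hΔ hdegΔ hα hinv (notMem_erase u s)
    ((card_le_card (filter_subset_filter _ (erase_subset u s))).trans huk)

end SimpleGraph
namespace SimpleGraph

variable {G : SimpleGraph V}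

def incMk {a b : V} (h : G.Adj a b) : Inc G :=
  ⟨(a, s(a, b)), G.mem_edgeSet.2 h, Sym2.mem_mk_left a b⟩

theorem Inc.exists_eq_incMk (i : Inc G) : ∃ (a b : V) (h : G.Adj a b), i = incMk h := by
  obtain ⟨⟨a, e⟩, he, ha⟩ := i
  refine ⟨a, Sym2.Mem.other ha, G.mem_edgeSet.1 ((Sym2.other_spec ha).symm ▸ he), ?_⟩
  simp [incMk, Sym2.other_spec ha]

variable {α : Type*}

noncomputable def toVIColoring (f : V → α) (g : V → V → α) : VIElem G → α :=
  Sum.elim f fun i => g i.1.1 (Sym2.Mem.other i.2.2)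

@[simp] theorem toVIColoring_inl (f : V → α) (g : V → V → α) (v : V) :
    toVIColoring (G := G) f g (Sum.inl v) = f v := rfl

@[simp] theorem toVIColoring_incMk (f : V → α) (g : V → V → α) {a b : V} (h : G.Adj a b) :
    toVIColoring f g (Sum.inr (incMk h)) = g a b := by
  simp only [toVIColoring, incMk, Sum.elim_inr]
  rw [Sym2.congr_right.1 (Sym2.other_spec (Sym2.mem_mk_left a b))]

variable [Fintype V] {m : ℕ}

theorem IsIncColoringOn.isVIColoring {f : V → Fin m} {g : V → V → Fin m}
    (hc : G.IsIncColoringOn univ f g) : IsVIColoring G (toVIColoring f g) := by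
  have h := mem_univ (α := V)
  rintro (a | i) (b | j) hab
  · exact hc.adj (h a) (h b) hab
  · obtain ⟨c, d, hcd, rfl⟩ := j.exists_eq_incMk
    change a ∈ s(c, d) at hab
    rcases Sym2.mem_iff.1 hab with rfl | rfl
    · simpa using hc.tail (h a) (h d) hcd
    · simpa using hc.head (h c) (h a) hcd
  · obtain ⟨c, d, hcd, rfl⟩ := i.exists_eq_incMk
    change b ∈ s(c, d) at hab
    rcases Sym2.mem_iff.1 hab with rfl | rfl
    · simpa using (hc.tail (h b) (h d) hcd).symm
    · simpa using (hc.head (h c) (h b) hcd).symm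
  · obtain ⟨a, b, hab', rfl⟩ := i.exists_eq_incMk
    obtain ⟨c, d, hcd, rfl⟩ := j.exists_eq_incMk
    change incMk hab' ≠ incMk hcd ∧ (a = c ∨ s(a, b) = s(c, d) ∨ s(a, c) = s(a, b) ∨
      s(a, c) = s(c, d)) at hab
    obtain ⟨hne, hab⟩ := hab
    simp only [toVIColoring_incMk]
    rcases hab with rfl | he | he | he
    · refine hc.star (h a) (h b) (h d) hab' hcd fun hbd => hne ?_
      subst hbd
      rfl
    · rcases Sym2.eq_iff.1 he with ⟨rfl, rfl⟩ | ⟨rfl, rfl⟩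
      · exact (hne rfl).elim
      · exact hc.path (h a) (h b) (h a) hab' hcd
    · obtain rfl := Sym2.congr_right.1 he
      exact hc.path (h a) (h c) (h d) hab' hcd
    · rcases Sym2.eq_iff.1 he with ⟨rfl, rfl⟩ | ⟨rfl, -⟩
      · exact (G.irrefl hcd).elim
      · exact (hc.path (h c) (h a) (h b) hcd hab').symm

theorem image_toVIColoring_I2 [DecidableRel G.Adj] (f : V → Fin m) (g : V → V → Fin m) (v : V) :
    (fun i => toVIColoring f g (Sum.inr i)) '' I2 G v = G.inColors univ g v := by
  ext c
  simp only [Set.mem_image, mem_coe, inColors, mem_image, mem_filter, mem_univ, true_and]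
  constructor
  · rintro ⟨i, ⟨-, he⟩, rfl⟩
    obtain ⟨a, b, hab, rfl⟩ := i.exists_eq_incMk
    obtain rfl : b = v := Sym2.congr_right.1 he
    exact ⟨a, hab.symm, (toVIColoring_incMk f g hab).symm⟩
  · rintro ⟨x, hx, rfl⟩
    exact ⟨incMk hx.symm, ⟨hx.ne', rfl⟩, toVIColoring_incMk f g hx.symm⟩

theorem IsIncColoringOn.isVISColoring [DecidableRel G.Adj] {k : ℕ} {f : V → Fin m}
    {g : V → V → Fin m} (hc : G.IsIncColoringOn univ f g)
    (hinv : ∀ v, #(G.inColors univ g v) ≤ k) : IsVISColoring G k (toVIColoring f g) :=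
  ⟨hc.isVIColoring, fun v => by rw [image_toVIColoring_I2, Set.ncard_coe_finset]; exact hinv v⟩

theorem degree_le_maxDeg [DecidableRel G.Adj] (v : V) : G.degree v ≤ maxDeg G := by
  rw [← card_neighborSet_eq_degree, ← Nat.card_eq_fintype_card, Nat.card_coe_set_eq]
  exact le_sup (f := fun v => (G.neighborSet v).ncard) (mem_univ v)

end SimpleGraph

/-- Let `k ≥ 1` and let `G` be a `k`-degenerate finite simple graph with
maximum degree `Δ(G) ≥ 2`. Then `χ_{vi,k}(G) ≤ Δ(G) + 2k`. -/
theorem chiVIS_le_of_degenerate {V : Type*} [Fintype V] [DecidableEq V]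
    (G : SimpleGraph V) (k : ℕ) (hk : 1 ≤ k) (hdeg : Degenerate k G)
    (hΔ : 2 ≤ maxDeg G) :
    chiVIS G k ≤ maxDeg G + 2 * k := by
  classical
  obtain ⟨f, g, hc, hinv⟩ := exists_isIncColoringOn (α := Fin (maxDeg G + 2 * k)) hk hΔ hdeg
    degree_le_maxDeg (by simp) univ
  exact Nat.sInf_le ⟨toVIColoring f g, hc.isVISColoring fun v => hinv v (mem_univ v)⟩
end
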